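/- For any ξ ∈ Φ, the point f_ξ²(T) lies to the left of the stable subspace E^s(X) — i.e. (f_ξ²(T)₂ - X₂) - (λ_R^s - τ_R)·(f_ξ²(T)₁ - X₁) > 0 — if and only if ψ(ξ) > 0. -/

import Mathlib

/-!
Write `λ_s, λ_u` for the eigenvalues of `A_R`, so that `τ_R = λ_s + λ_u` and `δ_R = λ_s λ_u`.
`T` lies in `x > 0` and `f(T) = ((1 + λ_u)/(1 - λ_s), -δ_R/(1 - λ_s))` lies in `x ≤ 0` because
`λ_u < -1`, so `f²(T)` is an explicit rational function of `(τ_L, δ_L, λ_s, λ_u)`. Clearing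
denominators, the signed distance of `f²(T)` from `E^s(X)` is `-λ_u / ((1 - λ_s)(1 - λ_u)) · ψ(ξ)`,
and the prefactor is positive.
-/

noncomputable section

/-- The parameter region `Φ`: `τ_L > δ_L + 1`, `δ_L > 0`, `τ_R < -(δ_R + 1)`, `δ_R > 0`. -/
def PhiSet : Set (ℝ × ℝ × ℝ × ℝ) :=
  {ξ | ξ.1 > ξ.2.1 + 1 ∧ 0 < ξ.2.1 ∧ ξ.2.2.1 < -(ξ.2.2.2 + 1) ∧ 0 < ξ.2.2.2}

/-- The two-dimensional border-collision normal form `f_ξ`. -/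
def fmap (ξ : ℝ × ℝ × ℝ × ℝ) (z : ℝ × ℝ) : ℝ × ℝ :=
  if z.1 ≤ 0 then (ξ.1 * z.1 + z.2 + 1, -(ξ.2.1 * z.1))
  else (ξ.2.2.1 * z.1 + z.2 + 1, -(ξ.2.2.2 * z.1))

/-- The unstable eigenvalue `λ_R^u` of `A_R`. -/
def lamRu (ξ : ℝ × ℝ × ℝ × ℝ) : ℝ := (ξ.2.2.1 - Real.sqrt (ξ.2.2.1 ^ 2 - 4 * ξ.2.2.2)) / 2

/-- The stable eigenvalue `λ_R^s` of `A_R`. -/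
def lamRs (ξ : ℝ × ℝ × ℝ × ℝ) : ℝ := (ξ.2.2.1 + Real.sqrt (ξ.2.2.1 ^ 2 - 4 * ξ.2.2.2)) / 2

/-- The fixed point `X` of the right piece of `f_ξ`. -/
def fpX (ξ : ℝ × ℝ × ℝ × ℝ) : ℝ × ℝ :=
  (-1 / (ξ.2.2.1 - ξ.2.2.2 - 1), ξ.2.2.2 / (ξ.2.2.1 - ξ.2.2.2 - 1))

/-- The point `T`, the intersection of `E^u(X)` with `y = 0`. -/
def ptT (ξ : ℝ × ℝ × ℝ × ℝ) : ℝ × ℝ := (1 / (1 - lamRs ξ), 0)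

/-- The function `ψ`. -/
def psiFn (ξ : ℝ × ℝ × ℝ × ℝ) : ℝ :=
  (ξ.1 * ξ.2.2.1 - ξ.2.2.2) * lamRu ξ + (ξ.2.1 / ξ.2.2.2 + ξ.2.1 - 1) * lamRs ξ
    - ξ.1 * (1 + ξ.2.2.2) + ξ.2.2.1 * (1 - ξ.2.1)

theorem four_mul_le_sq_of_lt_neg {τ δ : ℝ} (h : τ < -(δ + 1)) : 4 * δ ≤ τ ^ 2 := by
  nlinarith [sq_nonneg (δ - 1), sq_nonneg (τ + δ + 1)]

theorem lamRs_add_lamRu (ξ : ℝ × ℝ × ℝ × ℝ) : lamRs ξ + lamRu ξ = ξ.2.2.1 := by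
  unfold lamRs lamRu; ring

theorem lamRs_mul_lamRu {ξ : ℝ × ℝ × ℝ × ℝ} (h : 4 * ξ.2.2.2 ≤ ξ.2.2.1 ^ 2) :
    lamRs ξ * lamRu ξ = ξ.2.2.2 := by
  have hsq := Real.sq_sqrt (sub_nonneg.mpr h)
  unfold lamRs lamRu
  linear_combination -hsq / 4

theorem lamRu_le_lamRs (ξ : ℝ × ℝ × ℝ × ℝ) : lamRu ξ ≤ lamRs ξ := by
  unfold lamRs lamRu
  linarith [Real.sqrt_nonneg (ξ.2.2.1 ^ 2 - 4 * ξ.2.2.2)]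

theorem lamR_bounds {ξ : ℝ × ℝ × ℝ × ℝ} (hξ : ξ ∈ PhiSet) :
    lamRu ξ < -1 ∧ -1 < lamRs ξ ∧ lamRs ξ < 0 := by
  obtain ⟨-, -, hτR, hδR⟩ := hξ
  have hsum := lamRs_add_lamRu ξ
  have hprod := lamRs_mul_lamRu (four_mul_le_sq_of_lt_neg hτR)
  have hle := lamRu_le_lamRs ξ
  -- `(1 + λ_s)(1 + λ_u) = 1 + τ_R + δ_R < 0` separates the eigenvalues by `-1`
  have hsplit : (1 + lamRs ξ) * (1 + lamRu ξ) < 0 := by nlinarith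
  have hu : lamRu ξ < -1 := by nlinarith
  refine ⟨hu, by nlinarith, by nlinarith⟩

theorem fmap_of_nonpos (ξ : ℝ × ℝ × ℝ × ℝ) {z : ℝ × ℝ} (hz : z.1 ≤ 0) :
    fmap ξ z = (ξ.1 * z.1 + z.2 + 1, -(ξ.2.1 * z.1)) :=
  if_pos hz

theorem fmap_of_pos (ξ : ℝ × ℝ × ℝ × ℝ) {z : ℝ × ℝ} (hz : 0 < z.1) :
    fmap ξ z = (ξ.2.2.1 * z.1 + z.2 + 1, -(ξ.2.2.2 * z.1)) :=
  if_neg hz.not_ge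

theorem fmap_ptT {ξ : ℝ × ℝ × ℝ × ℝ} (hs : lamRs ξ < 1) :
    fmap ξ (ptT ξ) = ((1 + lamRu ξ) / (1 - lamRs ξ), -(ξ.2.2.2 / (1 - lamRs ξ))) := by
  have hpos : 0 < 1 - lamRs ξ := by linarith
  rw [fmap_of_pos ξ (show 0 < (ptT ξ).1 from one_div_pos.mpr hpos), ptT, ← lamRs_add_lamRu ξ]
  ext
  · field_simp
    ring
  · field_simp

theorem fmap_fmap_ptT {ξ : ℝ × ℝ × ℝ × ℝ} (hu : lamRu ξ ≤ -1) (hs : lamRs ξ < 1) :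
    fmap ξ (fmap ξ (ptT ξ)) =
      (ξ.1 * ((1 + lamRu ξ) / (1 - lamRs ξ)) - ξ.2.2.2 / (1 - lamRs ξ) + 1,
        -(ξ.2.1 * ((1 + lamRu ξ) / (1 - lamRs ξ)))) := by
  rw [fmap_ptT hs, fmap_of_nonpos]
  · ext <;> ring
  · exact div_nonpos_of_nonpos_of_nonneg (by linarith) (by linarith)

theorem fpX_eq (ξ : ℝ × ℝ × ℝ × ℝ) (h : 4 * ξ.2.2.2 ≤ ξ.2.2.1 ^ 2) :
    fpX ξ = (1 / ((1 - lamRs ξ) * (1 - lamRu ξ)),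
      -(lamRs ξ * lamRu ξ / ((1 - lamRs ξ) * (1 - lamRu ξ)))) := by
  have hden : ξ.2.2.1 - ξ.2.2.2 - 1 = -((1 - lamRs ξ) * (1 - lamRu ξ)) := by
    rw [← lamRs_add_lamRu ξ, ← lamRs_mul_lamRu h]; ring
  rw [fpX, hden, ← lamRs_mul_lamRu h, div_neg, div_neg, neg_div, neg_neg]

theorem f2T_side_eq_mul_psiFn {ξ : ℝ × ℝ × ℝ × ℝ} (hξ : ξ ∈ PhiSet) :
    ((fmap ξ (fmap ξ (ptT ξ))).2 - (fpX ξ).2)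
        - (lamRs ξ - ξ.2.2.1) * ((fmap ξ (fmap ξ (ptT ξ))).1 - (fpX ξ).1)
      = -lamRu ξ / ((1 - lamRs ξ) * (1 - lamRu ξ)) * psiFn ξ := by
  have hdisc := four_mul_le_sq_of_lt_neg hξ.2.2.1
  obtain ⟨hu, hs, hs0⟩ := lamR_bounds hξ
  rw [fmap_fmap_ptT hu.le (by linarith), fpX_eq ξ hdisc, psiFn, ← lamRs_add_lamRu ξ, ← lamRs_mul_lamRu hdisc]
  have : 1 - lamRs ξ ≠ 0 := by linarith
  have : 1 - lamRu ξ ≠ 0 := by linarith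
  have : lamRs ξ ≠ 0 := hs0.ne
  have : lamRu ξ ≠ 0 := by linarith
  simp only
  field_simp
  ring

/-- Proposition 3.3: for `ξ ∈ Φ`, the point `f_ξ²(T)` lies to the left of the stable
subspace `E^s(X)` if and only if `ψ(ξ) > 0`. -/
theorem f2T_left_of_Es_iff_psi_pos (ξ : ℝ × ℝ × ℝ × ℝ) (hξ : ξ ∈ PhiSet) :
    0 < ((fmap ξ (fmap ξ (ptT ξ))).2 - (fpX ξ).2)
        - (lamRs ξ - ξ.2.2.1) * ((fmap ξ (fmap ξ (ptT ξ))).1 - (fpX ξ).1)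
      ↔ 0 < psiFn ξ := by
  obtain ⟨hu, -, hs⟩ := lamR_bounds hξ
  rw [f2T_side_eq_mul_psiFn hξ]
  exact mul_pos_iff_of_pos_left (div_pos (by linarith) (mul_pos (by linarith) (by linarith)))

end
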